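/- Let q ≥ 1 be real, let ℓ ≥ 1 be an integer, and let L : ℕ → ℕ be a finitely supported function with total mass N = ∑_{n≥1} n·L_n ≥ 1. Then (1/(2N²))·∑_{m≥1} ∑_{n≥1} (m^q + n^q)·L_m·(L_n − 1[m=n])·Δ_{ℓ+1}(m,n) ≥ ℓ^{q−1}·G_ℓ·(1 − G_{ℓ+1}) − 2·ℓ^q/N, where G_r = (1/N)·∑_{n≥r} n·L_n. -/

import Mathlib

/-!
The summand is nonnegative and symmetric in the two sizes, so it suffices to look at pairs
`(a, b)` with `b ≤ ℓ ≤ a`, counted in both orders. For such pairs `a ^ q ≥ ℓ ^ (q - 1) * a` and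
`Δ_{ℓ+1}(a, b) ≥ b`, so the pair contributes at least `ℓ ^ (q - 1) * a L_a * b (L_b - 1[a = b])`.
Summing over `b` costs at most `ℓ` for the diagonal term, which leaves
`2 ℓ ^ (q - 1) * (N G_ℓ) * (N (1 - G_{ℓ+1}) - ℓ)`; after dividing by `2 N ^ 2` the correction is
`ℓ ^ q G_ℓ / N ≤ ℓ ^ q / N`.
-/

/-- Total mass `N = ∑_{n ≥ 1} n · L_n` of a particle configuration `L`. -/
noncomputable def totalMass (L : ℕ → ℕ) : ℝ :=
  ∑' n : ℕ, (n : ℝ) * (L n : ℝ)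

/-- `G_r(L) = (1/N) ∑_{n ≥ r} n · L_n`, the fraction of mass in particles of size
at least `r`. -/
noncomputable def tailFrac (L : ℕ → ℕ) (r : ℕ) : ℝ :=
  (totalMass L)⁻¹ * ∑' n : ℕ, ((n : ℝ) + (r : ℝ)) * (L (n + r) : ℝ)

/-- `Δ_K(m,n) = (m+n)·1[m+n ≥ K] − m·1[m ≥ K] − n·1[n ≥ K]`, the change of the
test function `ψ(j) = j·1[j ≥ K]` when particles of sizes `m` and `n` merge. -/
noncomputable def deltaMass (K m n : ℕ) : ℝ :=
  (if K ≤ m + n then ((m : ℝ) + (n : ℝ)) else 0)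
    - (if K ≤ m then (m : ℝ) else 0) - (if K ≤ n then (n : ℝ) else 0)

open Finset

lemma deltaMass_nonneg (K a b : ℕ) : 0 ≤ deltaMass K a b := by
  unfold deltaMass
  split_ifs <;> first | positivity | (exfalso; omega) | linarith

lemma deltaMass_comm (K a b : ℕ) : deltaMass K a b = deltaMass K b a := by
  unfold deltaMass
  rw [add_comm b, add_comm (b : ℝ)]
  ring

@[simp]
lemma deltaMass_zero_right (K a : ℕ) : deltaMass K a 0 = 0 := by
  simp [deltaMass]

lemma le_deltaMass_succ {ℓ a b : ℕ} (hb : b ≤ ℓ) (ha : ℓ ≤ a) :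
    (b : ℝ) ≤ deltaMass (ℓ + 1) a b := by
  rcases Nat.eq_zero_or_pos b with rfl | hb0
  · simp
  have : (0 : ℝ) ≤ a := Nat.cast_nonneg a
  unfold deltaMass
  split_ifs <;> first | (exfalso; omega) | linarith

lemma rpow_sub_one_mul_le_rpow {x y q : ℝ} (hx : 0 ≤ x) (hxy : x ≤ y) (hq : 1 ≤ q) :
    x ^ (q - 1) * y ≤ y ^ q := by
  rcases (hx.trans hxy).eq_or_lt with rfl | hy
  · simpa using Real.rpow_nonneg le_rfl q
  calc x ^ (q - 1) * y ≤ y ^ (q - 1) * y := by gcongr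
    _ = y ^ q := by rw [Real.rpow_sub_one hy.ne', div_mul_cancel₀ _ hy.ne']

lemma mul_le_rpow_mul_deltaMass {q : ℝ} (hq : 1 ≤ q) {ℓ a b : ℕ} (hb : b ≤ ℓ) (ha : ℓ ≤ a) :
    (ℓ : ℝ) ^ (q - 1) * (a * b) ≤ (a : ℝ) ^ q * deltaMass (ℓ + 1) a b := by
  rw [← mul_assoc]
  exact mul_le_mul (rpow_sub_one_mul_le_rpow (Nat.cast_nonneg _) (mod_cast ha) hq)
    (le_deltaMass_succ hb ha) (Nat.cast_nonneg _) (by positivity)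

def pairCount (L : ℕ → ℕ) (a b : ℕ) : ℝ :=
  (L a : ℝ) * ((L b : ℝ) - if a = b then 1 else 0)

lemma pairCount_nonneg (L : ℕ → ℕ) (a b : ℕ) : 0 ≤ pairCount L a b := by
  unfold pairCount
  split_ifs with h
  · subst h
    rcases Nat.eq_zero_or_pos (L a) with h0 | h0
    · simp [h0]
    · have : (1 : ℝ) ≤ L a := mod_cast h0
      nlinarith
  · rw [sub_zero]; positivity

lemma pairCount_comm (L : ℕ → ℕ) (a b : ℕ) : pairCount L a b = pairCount L b a := by
  unfold pairCount
  rcases eq_or_ne a b with rfl | h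
  · rfl
  · rw [if_neg h, if_neg h.symm]; ring

lemma pairCount_eq_zero_of_left {L : ℕ → ℕ} {a : ℕ} (h : L a = 0) (b : ℕ) :
    pairCount L a b = 0 := by
  simp [pairCount, h]

lemma pairCount_eq_zero_of_right {L : ℕ → ℕ} {b : ℕ} (h : L b = 0) (a : ℕ) :
    pairCount L a b = 0 := by
  rw [pairCount_comm, pairCount_eq_zero_of_left h]

noncomputable def generatorTerm (q : ℝ) (K : ℕ) (L : ℕ → ℕ) (a b : ℕ) : ℝ :=
  ((a : ℝ) ^ q + (b : ℝ) ^ q) * pairCount L a b * deltaMass K a b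

lemma generatorTerm_succ_succ (q : ℝ) (K : ℕ) (L : ℕ → ℕ) (m n : ℕ) :
    generatorTerm q K L (m + 1) (n + 1) =
      (((m : ℝ) + 1) ^ q + ((n : ℝ) + 1) ^ q) * (L (m + 1) : ℝ)
        * ((L (n + 1) : ℝ) - if m = n then 1 else 0) * deltaMass K (m + 1) (n + 1) := by
  simp [generatorTerm, pairCount, mul_assoc]

lemma tsum_succ_eq_sum_range {M : Type*} [AddCommMonoid M] [TopologicalSpace M] {f : ℕ → M}
    {K : ℕ} (h0 : f 0 = 0) (hK : ∀ n, K ≤ n → f n = 0) :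
    ∑' n, f (n + 1) = ∑ n ∈ range K, f n := by
  rw [tsum_eq_sum (s := range K) fun n hn => hK _ (by simp at hn; omega),
    ← add_zero (∑ n ∈ range K, f (n + 1)), ← h0, ← sum_range_succ', sum_range_succ,
    hK K le_rfl, add_zero]

lemma tsum_tsum_generatorTerm_succ (q : ℝ) (J : ℕ) {L : ℕ → ℕ} {K : ℕ}
    (hK : ∀ n, K ≤ n → L n = 0) :
    ∑' (m : ℕ) (n : ℕ), generatorTerm q J L (m + 1) (n + 1)
      = ∑ a ∈ range K, ∑ b ∈ range K, generatorTerm q J L a b := by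
  have hrow : ∀ a, ∑' n, generatorTerm q J L a (n + 1) = ∑ b ∈ range K, generatorTerm q J L a b :=
    fun a => tsum_succ_eq_sum_range (by simp [generatorTerm])
      fun n hn => by simp [generatorTerm, pairCount_eq_zero_of_right (hK n hn)]
  simp only [hrow]
  refine tsum_succ_eq_sum_range (sum_eq_zero fun b _ => ?_) fun n hn => sum_eq_zero fun b _ => ?_
  · simp [generatorTerm, deltaMass_comm _ 0]
  · simp [generatorTerm, pairCount_eq_zero_of_left (hK n hn)]

lemma totalMass_eq_sum_range {L : ℕ → ℕ} {K : ℕ} (hK : ∀ n, K ≤ n → L n = 0) :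
    totalMass L = ∑ n ∈ range K, (n : ℝ) * L n :=
  tsum_eq_sum fun n hn => by simp [hK n (by simpa using hn)]

lemma summable_mass {L : ℕ → ℕ} {K : ℕ} (hK : ∀ n, K ≤ n → L n = 0) :
    Summable fun n : ℕ => (n : ℝ) * L n :=
  summable_of_ne_finset_zero (s := range K) fun n hn => by simp [hK n (by simpa using hn)]

lemma tailFrac_eq {L : ℕ → ℕ} (hL : Summable fun n : ℕ => (n : ℝ) * L n) (r : ℕ) :
    tailFrac L r = (totalMass L)⁻¹ * (totalMass L - ∑ n ∈ range r, (n : ℝ) * L n) := by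
  rw [tailFrac, totalMass, ← hL.sum_add_tsum_nat_add r]
  push_cast
  ring

lemma tailFrac_eq_sum_Ico {L : ℕ → ℕ} {K r : ℕ} (hK : ∀ n, K ≤ n → L n = 0) (hrK : r ≤ K) :
    tailFrac L r = (totalMass L)⁻¹ * ∑ n ∈ Ico r K, (n : ℝ) * L n := by
  rw [tailFrac_eq (summable_mass hK), totalMass_eq_sum_range hK, ← sum_range_add_sum_Ico _ hrK,
    add_sub_cancel_left]

lemma one_sub_tailFrac {L : ℕ → ℕ} (hL : Summable fun n : ℕ => (n : ℝ) * L n)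
    (hN : totalMass L ≠ 0) (r : ℕ) :
    1 - tailFrac L r = (totalMass L)⁻¹ * ∑ n ∈ range r, (n : ℝ) * L n := by
  rw [tailFrac_eq hL, mul_sub, inv_mul_cancel₀ hN, sub_sub_cancel]

lemma sum_range_sum_range_ite {M : Type*} [AddCommMonoid M] {ℓ K : ℕ} (hℓK : ℓ < K)
    (f : ℕ → ℕ → M) :
    ∑ a ∈ range K, ∑ b ∈ range K, (if ℓ ≤ a ∧ b ≤ ℓ then f a b else 0)
      = ∑ a ∈ Ico ℓ K, ∑ b ∈ range (ℓ + 1), f a b := by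
  have hIco : (range K).filter (ℓ ≤ ·) = Ico ℓ K := by ext; simp; omega
  have hrange : (range K).filter (· ≤ ℓ) = range (ℓ + 1) := by ext; simp; omega
  simp only [ite_and, sum_ite_irrel, sum_const_zero, ← sum_filter, hIco, hrange]

lemma sum_mul_sub_le_sum_mul_sub_ite (L : ℕ → ℕ) (ℓ a : ℕ) :
    ∑ b ∈ range (ℓ + 1), (b : ℝ) * L b - ℓ
      ≤ ∑ b ∈ range (ℓ + 1), (b : ℝ) * ((L b : ℝ) - if a = b then 1 else 0) := by
  have hdiag : (∑ b ∈ range (ℓ + 1), if a = b then (b : ℝ) else 0) ≤ ℓ := by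
    rw [sum_ite_eq]
    split_ifs with h
    · exact_mod_cast Nat.lt_succ_iff.mp (mem_range.mp h)
    · positivity
  simp only [mul_sub, mul_ite, mul_one, mul_zero, sum_sub_distrib]
  linarith

lemma sum_mul_mul_sub_le_sum_sum_pairCount (L : ℕ → ℕ) (ℓ : ℕ) (s : Finset ℕ) :
    (∑ a ∈ s, (a : ℝ) * L a) * (∑ b ∈ range (ℓ + 1), (b : ℝ) * L b - ℓ)
      ≤ ∑ a ∈ s, ∑ b ∈ range (ℓ + 1), ((a : ℝ) * b) * pairCount L a b := by
  rw [sum_mul]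
  refine sum_le_sum fun a _ => ?_
  calc (a : ℝ) * L a * (∑ b ∈ range (ℓ + 1), (b : ℝ) * L b - ℓ)
      ≤ (a : ℝ) * L a * ∑ b ∈ range (ℓ + 1), (b : ℝ) * ((L b : ℝ) - if a = b then 1 else 0) := by
        gcongr
        exact sum_mul_sub_le_sum_mul_sub_ite L ℓ a
    _ = _ := by
        rw [mul_sum]
        refine sum_congr rfl fun b _ => ?_
        rw [pairCount]
        ring

def crossTerm (ℓ : ℕ) (L : ℕ → ℕ) (a b : ℕ) : ℝ :=
  if ℓ ≤ a ∧ b ≤ ℓ then ((a : ℝ) * b) * pairCount L a b else 0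

lemma sum_sum_crossTerm {ℓ K : ℕ} (hℓK : ℓ < K) (L : ℕ → ℕ) :
    ∑ a ∈ range K, ∑ b ∈ range K, crossTerm ℓ L a b
      = ∑ a ∈ Ico ℓ K, ∑ b ∈ range (ℓ + 1), ((a : ℝ) * b) * pairCount L a b :=
  sum_range_sum_range_ite hℓK _

lemma rpow_sub_one_mul_crossTerm_le {q : ℝ} (hq : 1 ≤ q) (L : ℕ → ℕ) (ℓ a b : ℕ) :
    (ℓ : ℝ) ^ (q - 1) * crossTerm ℓ L a b
      ≤ (a : ℝ) ^ q * pairCount L a b * deltaMass (ℓ + 1) a b := by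
  have hP := pairCount_nonneg L a b
  rw [crossTerm]
  split_ifs with h
  · calc (ℓ : ℝ) ^ (q - 1) * ((a : ℝ) * b * pairCount L a b)
        = (ℓ : ℝ) ^ (q - 1) * ((a : ℝ) * b) * pairCount L a b := by ring
      _ ≤ (a : ℝ) ^ q * deltaMass (ℓ + 1) a b * pairCount L a b :=
        mul_le_mul_of_nonneg_right (mul_le_rpow_mul_deltaMass hq h.2 h.1) hP
      _ = _ := by ring
  · rw [mul_zero]
    have := deltaMass_nonneg (ℓ + 1) a b
    positivity

lemma rpow_sub_one_mul_crossTerm_add_le_generatorTerm {q : ℝ} (hq : 1 ≤ q) (L : ℕ → ℕ)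
    (ℓ a b : ℕ) :
    (ℓ : ℝ) ^ (q - 1) * (crossTerm ℓ L a b + crossTerm ℓ L b a)
      ≤ generatorTerm q (ℓ + 1) L a b :=
  calc _ ≤ (a : ℝ) ^ q * pairCount L a b * deltaMass (ℓ + 1) a b
        + (b : ℝ) ^ q * pairCount L b a * deltaMass (ℓ + 1) b a := by
        rw [mul_add]
        exact add_le_add (rpow_sub_one_mul_crossTerm_le hq L ℓ a b)
          (rpow_sub_one_mul_crossTerm_le hq L ℓ b a)
    _ = generatorTerm q (ℓ + 1) L a b := by
        rw [generatorTerm, pairCount_comm L b, deltaMass_comm _ b]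
        ring

lemma mul_sum_mul_sub_le_sum_sum_generatorTerm {q : ℝ} (hq : 1 ≤ q) (L : ℕ → ℕ) {ℓ K : ℕ}
    (hℓK : ℓ < K) :
    2 * (ℓ : ℝ) ^ (q - 1) *
        ((∑ a ∈ Ico ℓ K, (a : ℝ) * L a) * (∑ b ∈ range (ℓ + 1), (b : ℝ) * L b - ℓ))
      ≤ ∑ a ∈ range K, ∑ b ∈ range K, generatorTerm q (ℓ + 1) L a b :=
  calc _ ≤ 2 * (ℓ : ℝ) ^ (q - 1) * ∑ a ∈ range K, ∑ b ∈ range K, crossTerm ℓ L a b := by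
        rw [sum_sum_crossTerm hℓK]
        gcongr
        exact sum_mul_mul_sub_le_sum_sum_pairCount L ℓ _
    _ = ∑ a ∈ range K, ∑ b ∈ range K,
          (ℓ : ℝ) ^ (q - 1) * (crossTerm ℓ L a b + crossTerm ℓ L b a) := by
        simp only [mul_add, sum_add_distrib, ← mul_sum]
        rw [sum_comm (f := fun a b => crossTerm ℓ L b a)]
        ring
    _ ≤ _ := sum_le_sum fun a _ => sum_le_sum fun b _ =>
        rpow_sub_one_mul_crossTerm_add_le_generatorTerm hq L ℓ a b

lemma mul_inv_mul_mul_inv_sub_le {N A B S P x : ℝ} (hN : 0 < N) (hAN : A ≤ N) (hP : 0 ≤ P)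
    (hx : 0 ≤ x) (hS : 2 * P * (A * (B - x)) ≤ S) :
    P * (N⁻¹ * A) * (N⁻¹ * B) - 2 * (P * x) / N ≤ 1 / (2 * N ^ 2) * S := by
  have hgap : 1 / (2 * N ^ 2) * S - (P * (N⁻¹ * A) * (N⁻¹ * B) - 2 * (P * x) / N)
      = (S - 2 * P * (A * (B - x))) / (2 * N ^ 2) + P * x * (2 * N - A) / N ^ 2 := by
    field_simp
    ring
  rw [← sub_nonneg, hgap]
  have := sub_nonneg.2 hS
  have : 0 ≤ 2 * N - A := by linarith
  positivity

/-- Generator lower bound for the kernel `m^q + n^q`: the action of the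
Marcus–Lushnikov generator on the tail mass `G_{ℓ+1}` is at least
`ℓ^{q−1} G_ℓ (1 − G_{ℓ+1}) − 2 ℓ^q / N`. -/
theorem generator_tail_mass_lower_bound
    (q : ℝ) (hq : 1 ≤ q) (ℓ : ℕ) (hℓ : 1 ≤ ℓ)
    (L : ℕ → ℕ) (hLfin : (Function.support L).Finite)
    (hN : 1 ≤ totalMass L) :
    (ℓ : ℝ) ^ (q - 1) * tailFrac L ℓ * (1 - tailFrac L (ℓ + 1))
        - 2 * (ℓ : ℝ) ^ q / totalMass L
      ≤ (1 / (2 * totalMass L ^ 2)) *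
          ∑' (m : ℕ) (n : ℕ),
            (((m : ℝ) + 1) ^ q + ((n : ℝ) + 1) ^ q) * (L (m + 1) : ℝ)
              * ((L (n + 1) : ℝ) - if m = n then 1 else 0)
              * deltaMass (ℓ + 1) (m + 1) (n + 1) := by
  obtain ⟨K, hℓK, hK⟩ : ∃ K, ℓ < K ∧ ∀ n, K ≤ n → L n = 0 := by
    obtain ⟨B, hB⟩ := hLfin.bddAbove
    exact ⟨B + ℓ + 1, by omega, fun n hn => by_contra fun h => by have := hB h; omega⟩
  have hN0 : 0 < totalMass L := by linarith
  simp only [← generatorTerm_succ_succ]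
  rw [tsum_tsum_generatorTerm_succ q (ℓ + 1) hK, tailFrac_eq_sum_Ico hK hℓK.le,
    one_sub_tailFrac (summable_mass hK) hN0.ne']
  have hbound := mul_sum_mul_sub_le_sum_sum_generatorTerm hq L hℓK
  have htail : ∑ a ∈ Ico ℓ K, (a : ℝ) * L a ≤ totalMass L := by
    rw [totalMass_eq_sum_range hK]
    exact sum_le_sum_of_subset_of_nonneg (fun n hn => mem_range.2 (mem_Ico.1 hn).2)
      fun n _ _ => by positivity
  have hℓ0 : (ℓ : ℝ) ≠ 0 := Nat.cast_ne_zero.2 (by omega)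
  have hrpow : (ℓ : ℝ) ^ q = (ℓ : ℝ) ^ (q - 1) * ℓ := by
    rw [Real.rpow_sub_one hℓ0, div_mul_cancel₀ _ hℓ0]
  rw [hrpow]
  exact mul_inv_mul_mul_inv_sub_le hN0 htail (by positivity) (Nat.cast_nonneg ℓ) hbound
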